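/- For n ≥ 2 and an even nonnegative integer b with b' = b/2, the number of nonnegative integer solutions of x_1 + x_2 + ... + x_{n−1} + 2 x_n = b equals ∑_{k=0}^{⌊(n−1)/2⌋} C(n−1, 2k) · C(b'−k+1; n−1), where C(m; n−1) = (1/(n−1)!)·m(m+1)···(m+n−2) if m > 0 and 0 otherwise, and C(n−1, 2k) is the usual binomial coefficient. -/

import Mathlib

/-!
Write each `x_i = 2 g_i + ε_i` with `ε_i ∈ {0, 1}` and let `S = {i | ε_i = 1}`. The equation
becomes `2 (∑ g_i + x_n) + |S| = b`, so `|S| = 2k` is even, and for each of the `C(n-1, 2k)`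
choices of `S` the unknowns `g_1, …, g_{n-1}, x_n` form an arbitrary solution of
`∑ g_i + x_n = b/2 - k`. By stars and bars there are `C(b/2 - k + 1; n - 1)` of these.
-/

/-- `C(m; j)` : equals `(1/j!)·m(m+1)···(m+j-1)` if `m > 0`, and `0` otherwise. -/
def Cm (m : ℤ) (j : ℕ) : ℕ := if 0 < m then Nat.choose (m.toNat + j - 1) j else 0

open Finset

section StarsAndBars

variable (α : Type*) [Fintype α] [DecidableEq α]

theorem card_fun_sum_eq (t : ℕ) :
    Nat.card {f : α → ℕ // ∑ i, f i = t} = (Fintype.card α + t - 1).choose t := by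
  rw [← Nat.card_congr (Sym.equivNatSumOfFintype α t), Nat.card_eq_fintype_card,
    Sym.card_sym_eq_choose]

theorem card_prod_sum_add_eq (t : ℕ) :
    Nat.card {q : (α → ℕ) × ℕ // ∑ i, q.1 i + q.2 = t} = (t + Fintype.card α).choose t := by
  have e : {q : (α → ℕ) × ℕ // ∑ i, q.1 i + q.2 = t} ≃ {f : Option α → ℕ // ∑ i, f i = t} :=
    ((Equiv.prodComm (α → ℕ) ℕ).trans (Equiv.piOptionEquivProd (β := fun _ => ℕ)).symm)
      |>.subtypeEquiv fun q => by simp [Fintype.sum_option, add_comm]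
  rw [Nat.card_congr e, card_fun_sum_eq, Fintype.card_option]
  congr 1
  omega

theorem finite_prod_sum_add_eq (t : ℕ) : Finite {q : (α → ℕ) × ℕ // ∑ i, q.1 i + q.2 = t} :=
  Nat.finite_of_card_ne_zero <| by
    rw [card_prod_sum_add_eq]
    exact (Nat.choose_pos (Nat.le_add_right t _)).ne'

end StarsAndBars

section Parity

variable {α : Type*} [Fintype α] [DecidableEq α]

def parityEquiv : (α → ℕ) ≃ Finset α × (α → ℕ) where
  toFun x := (univ.filter (fun i => x i % 2 = 1), fun i => x i / 2)
  invFun p i := 2 * p.2 i + if i ∈ p.1 then 1 else 0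
  left_inv x := by
    funext i
    simp only [mem_filter, mem_univ, true_and]
    split_ifs <;> omega
  right_inv p := by
    ext i
    · by_cases hi : i ∈ p.1 <;> simp [hi]
    · by_cases hi : i ∈ p.1 <;> simp [hi]
      omega

theorem sum_parityEquiv_symm (p : Finset α × (α → ℕ)) :
    ∑ i, parityEquiv.symm p i = 2 * ∑ i, p.2 i + #p.1 := by
  simp [parityEquiv, sum_add_distrib, mul_sum]

end Parity

theorem sum_range_succ_eq_sum_two_mul_of_odd_eq_zero {M : Type*} [AddCommMonoid M] (f : ℕ → M)
    (hf : ∀ j, Odd j → f j = 0) (m : ℕ) :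
    ∑ j ∈ range (m + 1), f j = ∑ k ∈ range (m / 2 + 1), f (2 * k) := by
  have hsub : (range (m / 2 + 1)).image (2 * ·) ⊆ range (m + 1) := by
    intro j hj
    simp only [mem_image, mem_range] at hj ⊢
    omega
  rw [← sum_subset hsub, sum_image fun a _ b _ h => by simpa using h]
  intro j hj hj'
  refine hf j (Nat.not_even_iff_odd.mp fun ⟨k, hk⟩ => hj' ?_)
  simp only [mem_image, mem_range] at hj ⊢
  exact ⟨k, by omega, by omega⟩

theorem Cm_natCast_sub_add_one (B k m : ℕ) :
    Cm ((B : ℤ) - k + 1) m = if k ≤ B then (B - k + m).choose m else 0 := by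
  unfold Cm
  split_ifs
  · congr 1
    omega
  all_goals omega

section Fibres

variable (α : Type*) [Fintype α] (B : ℕ)

instance finite_two_mul_sum_add_eq [DecidableEq α] (j : ℕ) :
    Finite {q : (α → ℕ) × ℕ // 2 * (∑ i, q.1 i + q.2) + j = 2 * B} :=
  have := finite_prod_sum_add_eq α (B - j / 2)
  Finite.of_injective _
    (Subtype.impEmbedding _ (fun q : (α → ℕ) × ℕ => ∑ i, q.1 i + q.2 = B - j / 2)
      fun _ _ => by omega).injective

theorem card_two_mul_sum_add_eq_of_odd {j : ℕ} (hj : Odd j) :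
    Nat.card {q : (α → ℕ) × ℕ // 2 * (∑ i, q.1 i + q.2) + j = 2 * B} = 0 := by
  obtain ⟨k, rfl⟩ := hj
  rw [Nat.card_eq_zero]
  left
  exact ⟨fun ⟨q, hq⟩ => by omega⟩

theorem card_two_mul_sum_add_two_mul_eq [DecidableEq α] (k : ℕ) :
    Nat.card {q : (α → ℕ) × ℕ // 2 * (∑ i, q.1 i + q.2) + 2 * k = 2 * B} =
      Cm ((B : ℤ) - k + 1) (Fintype.card α) := by
  rw [Cm_natCast_sub_add_one]
  split_ifs with hk
  · rw [← Nat.choose_symm_add, ← card_prod_sum_add_eq]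
    exact Nat.card_congr (Equiv.subtypeEquivRight fun q => by omega)
  · rw [Nat.card_eq_zero]
    left
    exact ⟨fun ⟨q, hq⟩ => by omega⟩

end Fibres

section Counting

variable {α : Type*} [Fintype α] [DecidableEq α]

def sumAddTwoMulEqEquivSigma (B : ℕ) :
    {p : (α → ℕ) × ℕ // ∑ i, p.1 i + 2 * p.2 = 2 * B} ≃
      Σ S : Finset α, {q : (α → ℕ) × ℕ // 2 * (∑ i, q.1 i + q.2) + #S = 2 * B} :=
  let e : Finset α × ((α → ℕ) × ℕ) ≃ (α → ℕ) × ℕ :=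
    (Equiv.prodAssoc _ _ _).symm.trans (parityEquiv.symm.prodCongr (Equiv.refl ℕ))
  (e.subtypeEquiv fun c => by
      simp only [e, Equiv.trans_apply, Equiv.prodAssoc_symm_apply, Equiv.prodCongr_apply,
        Prod.map, Equiv.refl_apply, sum_parityEquiv_symm]
      omega).symm.trans
    (Equiv.subtypeProdEquivSigmaSubtype fun (S : Finset α) (q : (α → ℕ) × ℕ) =>
      2 * (∑ i, q.1 i + q.2) + #S = 2 * B)

theorem card_sum_add_two_mul_eq (B : ℕ) :
    Nat.card {p : (α → ℕ) × ℕ // ∑ i, p.1 i + 2 * p.2 = 2 * B} =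
      ∑ k ∈ range (Fintype.card α / 2 + 1),
        (Fintype.card α).choose (2 * k) * Cm ((B : ℤ) - k + 1) (Fintype.card α) := by
  rw [Nat.card_congr (sumAddTwoMulEqEquivSigma B), Nat.card_sigma, ← powerset_univ,
    sum_powerset_apply_card
      (fun j => Nat.card {q : (α → ℕ) × ℕ // 2 * (∑ i, q.1 i + q.2) + j = 2 * B}),
    card_univ, sum_range_succ_eq_sum_two_mul_of_odd_eq_zero]
  · simp only [smul_eq_mul, card_two_mul_sum_add_two_mul_eq]
  · intro j hj
    rw [card_two_mul_sum_add_eq_of_odd α B hj, smul_zero]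

end Counting

theorem stmt12_general (n : ℕ) (b : ℕ) (hb : Even b) :
    Nat.card {p : (Fin (n - 1) → ℕ) × ℕ // (∑ i, p.1 i) + 2 * p.2 = b} =
      ∑ k ∈ Finset.range ((n - 1) / 2 + 1),
        Nat.choose (n - 1) (2 * k) * Cm ((b / 2 : ℕ) - (k : ℤ) + 1) (n - 1) := by
  obtain ⟨B, rfl⟩ := hb
  rw [← two_mul, Nat.mul_div_cancel_left B two_pos]
  simpa using card_sum_add_two_mul_eq (α := Fin (n - 1)) B

theorem stmt12 (n : ℕ) (hn : 2 ≤ n) (b : ℕ) (hb : Even b) :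
    Nat.card {p : (Fin (n - 1) → ℕ) × ℕ // (∑ i, p.1 i) + 2 * p.2 = b} =
      ∑ k ∈ Finset.range ((n - 1) / 2 + 1),
        Nat.choose (n - 1) (2 * k) * Cm ((b / 2 : ℕ) - (k : ℤ) + 1) (n - 1) :=
  stmt12_general n b hb
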